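/- For each b : Bool, under the intervention do(A₂ = b), i.e., keeping A₁ := C, setting A₂^b := b, and Y^b_M := A₁ && b && C && U in model M and Y^b_M̃ := b && C && U in model M̃, the joint distributions of (Y, A₁) coincide between the two models: for all y, a₁ : Bool, P(Y^b_M = y ∧ A₁ = a₁) = P(Y^b_M̃ = y ∧ A₁ = a₁). Explicitly, if b = true both sides equal (1−p) at (false,false), p(1−p) at (false,true), p² at (true,true), while if b = false both sides equal (1−p) at (false,false) and p at (false,true), with 0 elsewhere. -/

import Mathlib

/-- The confounder `C := W`. -/
def Cc {Ω : Type} (W : Ω → Bool) (ω : Ω) : Bool := W ω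

/-- The first action `A₁ := C`. -/
def A1 {Ω : Type} (W : Ω → Bool) (ω : Ω) : Bool := Cc W ω

/-- The second action `A₂ := A₁ && C && V₂`. -/
def A2 {Ω : Type} (V2 W : Ω → Bool) (ω : Ω) : Bool := A1 W ω && Cc W ω && V2 ω

/-- The outcome of model `M`: `Y := A₁ && A₂ && C && U`. -/
def YM {Ω : Type} (U V2 W : Ω → Bool) (ω : Ω) : Bool :=
  A1 W ω && A2 V2 W ω && Cc W ω && U ω

/-- The outcome of model `M̃`: `Y := A₂ && C && U`. -/
def YMt {Ω : Type} (U V2 W : Ω → Bool) (ω : Ω) : Bool :=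
  A2 V2 W ω && Cc W ω && U ω

/-- The outcome of model `M` under `do(A₂ = b)`: `Yᵇ := A₁ && b && C && U`. -/
def YMdo2 {Ω : Type} (U V2 W : Ω → Bool) (b : Bool) (ω : Ω) : Bool :=
  A1 W ω && b && Cc W ω && U ω

/-- The outcome of model `M̃` under `do(A₂ = b)`: `Yᵇ := b && C && U`. -/
def YMtdo2 {Ω : Type} (U V2 W : Ω → Bool) (b : Bool) (ω : Ω) : Bool :=
  b && Cc W ω && U ω

/-- The common distribution table of `(Y, A₁)` under `do(A₂ = b)` in Example 1. -/
noncomputable def do2Table (p : ℝ) : Bool → Bool → Bool → ENNReal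
  | false, false, false => ENNReal.ofReal (1 - p)
  | false, false, true  => ENNReal.ofReal p
  | true,  false, false => ENNReal.ofReal (1 - p)
  | true,  false, true  => ENNReal.ofReal (p * (1 - p))
  | true,  true,  true  => ENNReal.ofReal (p ^ 2)
  | _, _, _ => 0

/-- **Example 1, intervention on `A₂`.** Under `do(A₂ = b)`, the models `M` and `M̃`
induce the same joint distribution of `(Y, A₁)`, given explicitly by `do2Table`. -/
theorem example_do_A2_distributions_agree
    (p : ℝ) (hp0 : 0 ≤ p) (hp1 : p ≤ 1)
    {Ω : Type} [MeasurableSpace Ω] (P : MeasureTheory.Measure Ω)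
    [MeasureTheory.IsProbabilityMeasure P]
    (U V2 W : Ω → Bool) (hU : Measurable U) (hV2 : Measurable V2) (hW : Measurable W)
    (hindep : ProbabilityTheory.iIndepFun
      (m := fun _ : Fin 3 => (inferInstance : MeasurableSpace Bool)) ![U, V2, W] P)
    (hpU : P {ω | U ω = true} = ENNReal.ofReal p)
    (hpV : P {ω | V2 ω = true} = ENNReal.ofReal p)
    (hpW : P {ω | W ω = true} = ENNReal.ofReal p) :
    ∀ b y a1 : Bool,
      P {ω | YMdo2 U V2 W b ω = y ∧ A1 W ω = a1}
          = P {ω | YMtdo2 U V2 W b ω = y ∧ A1 W ω = a1}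
        ∧ P {ω | YMdo2 U V2 W b ω = y ∧ A1 W ω = a1}
          = do2Table p b y a1 := by
  have hYeq : ∀ b ω, YMdo2 U V2 W b ω = YMtdo2 U V2 W b ω := by
    intro b ω
    simp only [YMdo2, YMtdo2, A1, Cc]
    cases W ω <;> cases b <;> simp
  have hindUW : ProbabilityTheory.IndepFun U W P := by
    have h := hindep.indepFun (i := 0) (j := 2) (by decide)
    simpa using h
  have hWf : P {ω | W ω = false} = ENNReal.ofReal (1 - p) := by
    have hs : {ω | W ω = false} = {ω | W ω = true}ᶜ := by
      ext ω; simp [Bool.not_eq_true]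
    have hm : MeasurableSet {ω | W ω = true} := hW (measurableSet_singleton true)
    rw [hs, MeasureTheory.measure_compl hm (MeasureTheory.measure_ne_top P _), hpW,
      MeasureTheory.measure_univ, ← ENNReal.ofReal_one, ← ENNReal.ofReal_sub _ hp0]
  have hUf : P {ω | U ω = false} = ENNReal.ofReal (1 - p) := by
    have hs : {ω | U ω = false} = {ω | U ω = true}ᶜ := by
      ext ω; simp [Bool.not_eq_true]
    have hm : MeasurableSet {ω | U ω = true} := hU (measurableSet_singleton true)
    rw [hs, MeasureTheory.measure_compl hm (MeasureTheory.measure_ne_top P _), hpU,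
      MeasureTheory.measure_univ, ← ENNReal.ofReal_one, ← ENNReal.ofReal_sub _ hp0]
  have hmul : ∀ bu bw : Bool, P {ω | U ω = bu ∧ W ω = bw}
      = P {ω | U ω = bu} * P {ω | W ω = bw} := by
    intro bu bw
    have := hindUW.measure_inter_preimage_eq_mul {bu} {bw}
      (measurableSet_singleton bu) (measurableSet_singleton bw)
    simpa [Set.preimage, Set.inter_def, Set.mem_setOf_eq] using this
  intro b y a1
  constructor
  · congr 1
    ext ω
    simp [hYeq]
  · cases b <;> cases y <;> cases a1
    · -- b=false, y=false, a1=false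
      have hs : {ω | YMdo2 U V2 W false ω = false ∧ A1 W ω = false}
          = {ω | W ω = false} := by
        ext ω; simp [YMdo2, A1, Cc]
      rw [hs, hWf]; rfl
    · have hs : {ω | YMdo2 U V2 W false ω = false ∧ A1 W ω = true}
          = {ω | W ω = true} := by
        ext ω; simp [YMdo2, A1, Cc]
      rw [hs, hpW]; rfl
    · have hs : {ω | YMdo2 U V2 W false ω = true ∧ A1 W ω = false} = (∅ : Set Ω) := by
        ext ω; simp [YMdo2, A1, Cc]
      rw [hs]; simp [do2Table]
    · have hs : {ω | YMdo2 U V2 W false ω = true ∧ A1 W ω = true} = (∅ : Set Ω) := by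
        ext ω; simp [YMdo2, A1, Cc]
      rw [hs]; simp [do2Table]
    · -- b=true, y=false, a1=false
      have hs : {ω | YMdo2 U V2 W true ω = false ∧ A1 W ω = false}
          = {ω | W ω = false} := by
        ext ω
        simp only [YMdo2, A1, Cc, Set.mem_setOf_eq]
        cases W ω <;> cases U ω <;> simp
      rw [hs, hWf]; rfl
    · -- b=true, y=false, a1=true : U=false ∧ W=true
      have hs : {ω | YMdo2 U V2 W true ω = false ∧ A1 W ω = true}
          = {ω | U ω = false ∧ W ω = true} := by
        ext ω
        simp only [YMdo2, A1, Cc, Set.mem_setOf_eq]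
        cases W ω <;> cases U ω <;> simp
      rw [hs, hmul, hUf, hpW, ← ENNReal.ofReal_mul (by linarith)]
      show _ = ENNReal.ofReal (p * (1 - p))
      rw [mul_comm]
    · -- b=true, y=true, a1=false : empty
      have hs : {ω | YMdo2 U V2 W true ω = true ∧ A1 W ω = false} = (∅ : Set Ω) := by
        ext ω
        simp only [YMdo2, A1, Cc, Set.mem_setOf_eq]
        cases W ω <;> cases U ω <;> simp
      rw [hs]; simp [do2Table]
    · -- b=true, y=true, a1=true : U=true ∧ W=true
      have hs : {ω | YMdo2 U V2 W true ω = true ∧ A1 W ω = true}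
          = {ω | U ω = true ∧ W ω = true} := by
        ext ω
        simp only [YMdo2, A1, Cc, Set.mem_setOf_eq]
        cases W ω <;> cases U ω <;> simp
      rw [hs, hmul, hpU, hpW, ← ENNReal.ofReal_mul hp0]
      show _ = ENNReal.ofReal (p ^ 2)
      rw [sq]
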